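/- Assume Ψ is continuous and let β > 0. Let ρ̄ be a probability density on ℝ^d × ℝ^d with E(ρ̄) finite (in particular (g(θ)+|r|²/2)ρ̄ and ρ̄ log ρ̄ are integrable and Ψ is Bochner integrable with respect to [ρ̄]^θ(θ)dθ). Let k ≥ 1 and let f : ℝ^d × ℝ^d → ℝ be a smooth function with compact support contained in {(θ,r) : 1/k ≤ ρ̄(θ,r) ≤ k}, with ‖f‖_∞ ≤ 1 and ∫∫f = 0. Then ρ̄ + εf is a probability density for |ε| < 1/k, the map ε ↦ E(ρ̄ + εf) is well-defined there, and it is differentiable at ε = 0 with derivative ∫∫ (F'([ρ̄]^θ)(θ) + |r|²/2 + β⁻¹(1 + log ρ̄(θ,r))) f(θ,r) dθ dr. (Directional derivative of the free energy, used in the proof of Lemma D.1.) -/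

import Mathlib

open MeasureTheory Real
open scoped RealInnerProductSpace ENNReal

noncomputable def fEnergyR {d : ℕ} {F : Type*} [NormedAddCommGroup F]
    [InnerProductSpace ℝ F] [CompleteSpace F]
    (R : F → ℝ) (Ψ : EuclideanSpace ℝ (Fin d) → F) (g : EuclideanSpace ℝ (Fin d) → ℝ)
    (β : ℝ) (ρ : EuclideanSpace ℝ (Fin d) × EuclideanSpace ℝ (Fin d) → ℝ) : ℝ :=
  R (∫ θ, (∫ r, ρ (θ, r)) • Ψ θ) + (∫ θ, g θ * ∫ r, ρ (θ, r))
    + (∫ p, (‖p.2‖ ^ 2 / 2) * ρ p) + β⁻¹ * ∫ p, ρ p * Real.log (ρ p)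

lemma aux_integrable {X E : Type*} [MeasurableSpace X] [TopologicalSpace X]
    [OpensMeasurableSpace X] [T2Space X] [NormedAddCommGroup E]
    {μ : Measure X} [IsFiniteMeasureOnCompacts μ]
    {u : X → E} {K : Set X} (hK : IsCompact K)
    (hmeas : AEStronglyMeasurable u μ) {C : ℝ}
    (hb : ∀ x ∈ K, ‖u x‖ ≤ C) (h0 : ∀ x ∉ K, u x = 0) :
    Integrable u μ := by
  refine Integrable.mono' (g := K.indicator fun _ => C) ?_ hmeas ?_
  · exact (integrable_indicator_iff hK.isClosed.measurableSet).2
      (integrableOn_const hK.measure_lt_top.ne)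
  · filter_upwards with x
    by_cases hx : x ∈ K
    · simpa [Set.indicator_of_mem hx] using hb x hx
    · simp [Set.indicator_of_notMem hx, h0 x hx]

lemma aux_abs_mul_log_le {x M : ℝ} (hx : 0 ≤ x) (hxM : x ≤ M) (hM : 1 ≤ M) :
    |x * Real.log x| ≤ 1 + M * M := by
  rcases eq_or_lt_of_le hx with h0 | h0
  · rw [← h0]; simp; nlinarith
  rcases le_or_gt x 1 with h1 | h1
  · have h2 : |x * Real.log x| < 1 := by
      rw [mul_comm]; exact Real.abs_log_mul_self_lt x h0 h1
    nlinarith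
  · have hl0 : 0 ≤ Real.log x := Real.log_nonneg h1.le
    have hlM : Real.log x ≤ Real.log M := Real.log_le_log h0 hxM
    have hMM : Real.log M ≤ M := by
      have := Real.log_le_sub_one_of_pos (by linarith : (0:ℝ) < M); linarith
    rw [abs_of_nonneg (mul_nonneg hx hl0)]
    nlinarith

set_option maxHeartbeats 2000000 in
/-- directional derivative of the free energy, Lemma D.1: let `ρ̄` be a
probability density on `ℝ^d × ℝ^d` with finite free energy, `k ≥ 1`, and `f` a smooth
compactly supported function with support in `{1/k ≤ ρ̄ ≤ k}`, `‖f‖_∞ ≤ 1`, `∫∫f = 0`.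
Then for `|ε| < 1/k`, `ρ̄ + εf` is a probability density, `ε ↦ E(ρ̄ + εf)` is
well-defined, and it is differentiable at `ε = 0` with derivative
`∫∫(F'([ρ̄]^θ)(θ) + |r|²/2 + β⁻¹(1 + log ρ̄))f`. -/
theorem stmt_15 {d : ℕ} {F : Type*} [NormedAddCommGroup F] [InnerProductSpace ℝ F]
    [CompleteSpace F]
    (R : F → ℝ) (hR0 : ∀ ψ, 0 ≤ R ψ) (hRconv : ConvexOn ℝ Set.univ R)
    (gradR : F → F) (hgradR : ∀ ψ, HasGradientAt R (gradR ψ) ψ)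
    (Ψ : EuclideanSpace ℝ (Fin d) → F) (hΨcont : Continuous Ψ)
    (g : EuclideanSpace ℝ (Fin d) → ℝ) (hg0 : ∀ θ, 0 ≤ g θ) (hgmeas : Measurable g)
    (β : ℝ) (hβ : 0 < β)
    (ρb : EuclideanSpace ℝ (Fin d) × EuclideanSpace ℝ (Fin d) → ℝ)
    (hρbmeas : Measurable ρb) (hρb0 : 0 ≤ ρb) (hρbint : Integrable ρb)
    (hρb1 : (∫ p, ρb p) = 1)
    (hρbmom : Integrable fun p : EuclideanSpace ℝ (Fin d) × EuclideanSpace ℝ (Fin d) =>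
      (g p.1 + ‖p.2‖ ^ 2 / 2) * ρb p)
    (hρbent : Integrable fun p : EuclideanSpace ℝ (Fin d) × EuclideanSpace ℝ (Fin d) =>
      ρb p * Real.log (ρb p))
    (hρbΨ : Integrable fun θ => (∫ r, ρb (θ, r)) • Ψ θ)
    (k : ℕ) (hk : 1 ≤ k)
    (f : EuclideanSpace ℝ (Fin d) × EuclideanSpace ℝ (Fin d) → ℝ)
    (hfsmooth : ContDiff ℝ (⊤ : ℕ∞) f) (hfsupp : HasCompactSupport f)
    (hfsub : tsupport f ⊆ {p | (k : ℝ)⁻¹ ≤ ρb p ∧ ρb p ≤ (k : ℝ)})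
    (hfbdd : ∀ p, |f p| ≤ 1) (hfzero : (∫ p, f p) = 0) :
    (∀ ε : ℝ, |ε| < (k : ℝ)⁻¹ →
      (Measurable fun p => ρb p + ε * f p) ∧
      (0 ≤ fun p => ρb p + ε * f p) ∧
      (Integrable fun p => ρb p + ε * f p) ∧
      (∫ p, (ρb p + ε * f p)) = 1) ∧
    (∀ ε : ℝ, |ε| < (k : ℝ)⁻¹ →
      (Integrable fun p : EuclideanSpace ℝ (Fin d) × EuclideanSpace ℝ (Fin d) =>
        (g p.1 + ‖p.2‖ ^ 2 / 2) * (ρb p + ε * f p)) ∧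
      (Integrable fun p : EuclideanSpace ℝ (Fin d) × EuclideanSpace ℝ (Fin d) =>
        (ρb p + ε * f p) * Real.log (ρb p + ε * f p)) ∧
      (Integrable fun θ => (∫ r, ρb (θ, r) + ε * f (θ, r)) • Ψ θ)) ∧
    HasDerivAt (fun ε : ℝ => fEnergyR R Ψ g β fun p => ρb p + ε * f p)
      (∫ p : EuclideanSpace ℝ (Fin d) × EuclideanSpace ℝ (Fin d),
        (⟪gradR (∫ θ, (∫ r, ρb (θ, r)) • Ψ θ), Ψ p.1⟫ + g p.1 + ‖p.2‖ ^ 2 / 2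
          + β⁻¹ * (1 + Real.log (ρb p))) * f p) 0 := by
  classical
  have hfc : Continuous f := hfsmooth.continuous
  have hfint : Integrable f := hfc.integrable_of_hasCompactSupport hfsupp
  set kr : ℝ := (k : ℝ) with hkrdef
  have hkr : (1:ℝ) ≤ kr := by rw [hkrdef]; exact_mod_cast hk
  have hkrpos : (0:ℝ) < kr := by linarith
  have hK : IsCompact (tsupport f) := hfsupp
  set K : Set (EuclideanSpace ℝ (Fin d) × EuclideanSpace ℝ (Fin d)) := tsupport f with hKdef
  have hf0 : ∀ p, p ∉ K → f p = 0 := fun p hp => image_eq_zero_of_notMem_tsupport hp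
  have hKb : ∀ p ∈ K, kr⁻¹ ≤ ρb p ∧ ρb p ≤ kr := fun p hp => hfsub hp
  have hmemK : ∀ p, f p ≠ 0 → p ∈ K := fun p hp => subset_tsupport f hp
  -- sections
  have hprod : (volume : Measure (EuclideanSpace ℝ (Fin d) × EuclideanSpace ℝ (Fin d)))
      = (volume : Measure (EuclideanSpace ℝ (Fin d))).prod volume :=
    Measure.volume_eq_prod _ _
  have hρbsec : ∀ᵐ θ, Integrable fun r => ρb (θ, r) := by
    have : Integrable ρb ((volume : Measure (EuclideanSpace ℝ (Fin d))).prod volume) := by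
      rwa [← hprod]
    exact this.prod_right_ae
  have hK2 : IsCompact (Prod.snd '' K) := hK.image continuous_snd
  have hK1 : IsCompact (Prod.fst '' K) := hK.image continuous_fst
  have hfsec : ∀ θ, Integrable fun r => f (θ, r) := by
    intro θ
    refine aux_integrable hK2 ((hfc.comp (Continuous.prodMk_right θ)).aestronglyMeasurable)
      (C := 1) (fun r _ => by simpa using hfbdd (θ, r)) (fun r hr => ?_)
    by_contra h
    exact hr ⟨(θ, r), hmemK _ h, rfl⟩
  -- integral of sections of f : bound
  have hvmeas : StronglyMeasurable fun θ => ∫ r, f (θ, r) :=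
    hfc.stronglyMeasurable.integral_prod_right'
  -- vfun
  obtain ⟨MΨ, hMΨ⟩ : ∃ C, ∀ θ ∈ Prod.fst '' K, ‖Ψ θ‖ ≤ C :=
    hK1.exists_bound_of_continuousOn hΨcont.continuousOn
  have hvfun0 : ∀ θ, θ ∉ Prod.fst '' K → (∫ r, f (θ, r)) = 0 := by
    intro θ hθ
    have : ∀ r, f (θ, r) = 0 := by
      intro r; by_contra h; exact hθ ⟨(θ, r), hmemK _ h, rfl⟩
    simp [this]
  have hvbd : ∀ θ, |∫ r, f (θ, r)| ≤ (volume (Prod.snd '' K)).toReal := by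
    intro θ
    have h1 : |∫ r, f (θ, r)| ≤ ∫ r, |f (θ, r)| := by
      simpa [Real.norm_eq_abs] using
        norm_integral_le_integral_norm (fun r => f (θ, r))
    have h2 : (∫ r, |f (θ, r)|) ≤ ∫ r, (Prod.snd '' K).indicator (fun _ => (1:ℝ)) r := by
      refine integral_mono (hfsec θ).abs ?_ ?_
      · exact (integrable_indicator_iff hK2.isClosed.measurableSet).2
          (integrableOn_const hK2.measure_lt_top.ne)
      · intro r
        by_cases hr : r ∈ Prod.snd '' K
        · simpa [Set.indicator_of_mem hr] using hfbdd (θ, r)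
        · have : f (θ, r) = 0 := by
            by_contra h; exact hr ⟨(θ, r), hmemK _ h, rfl⟩
          simp [Set.indicator_of_notMem hr, this]
    have h3 : (∫ r, (Prod.snd '' K).indicator (fun _ => (1:ℝ)) r)
        = (volume (Prod.snd '' K)).toReal := by
      rw [integral_indicator hK2.isClosed.measurableSet]
      simp
      rfl
    linarith
  have hvint : Integrable fun θ => (∫ r, f (θ, r)) • Ψ θ := by
    refine aux_integrable hK1 ((hvmeas.smul hΨcont.stronglyMeasurable).aestronglyMeasurable)
      (C := (volume (Prod.snd '' K)).toReal * MΨ) (fun θ hθ => ?_) (fun θ hθ => ?_)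
    · rw [norm_smul, Real.norm_eq_abs]
      exact mul_le_mul (hvbd θ) (hMΨ θ hθ) (norm_nonneg _) ENNReal.toReal_nonneg
    · simp [hvfun0 θ hθ]
  -- basic integrability facts
  have hfabs : ∀ p, |f p| ≤ kr * ρb p := by
    intro p
    by_cases hp : f p = 0
    · simp only [hp, abs_zero]
      exact mul_nonneg hkrpos.le (hρb0 p)
    · have h1 := (hKb p (hmemK p hp)).1
      calc |f p| ≤ 1 := hfbdd p
        _ = kr * kr⁻¹ := by rw [mul_inv_cancel₀ hkrpos.ne']
        _ ≤ kr * ρb p := mul_le_mul_of_nonneg_left h1 hkrpos.le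
  have Igρ : Integrable fun p => g p.1 * ρb p := by
    refine hρbmom.mono (((hgmeas.comp measurable_fst).mul hρbmeas).aestronglyMeasurable) ?_
    filter_upwards with p
    have h1 := hg0 p.1
    have h2 : (0:ℝ) ≤ ρb p := hρb0 p
    have h3 : (0:ℝ) ≤ ‖p.2‖ ^ 2 / 2 := by positivity
    rw [Real.norm_eq_abs, Real.norm_eq_abs, abs_of_nonneg (mul_nonneg h1 h2),
      abs_of_nonneg (mul_nonneg (add_nonneg h1 h3) h2)]
    nlinarith
  have Ihρ : Integrable fun p => (‖p.2‖ ^ 2 / 2) * ρb p := by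
    refine hρbmom.mono (((measurable_snd.norm.pow measurable_const).div_const 2).mul
      hρbmeas).aestronglyMeasurable ?_
    filter_upwards with p
    have h1 := hg0 p.1
    have h2 : (0:ℝ) ≤ ρb p := hρb0 p
    have h3 : (0:ℝ) ≤ ‖p.2‖ ^ 2 / 2 := by positivity
    rw [Real.norm_eq_abs, Real.norm_eq_abs, abs_of_nonneg (mul_nonneg h3 h2),
      abs_of_nonneg (mul_nonneg (add_nonneg h1 h3) h2)]
    nlinarith
  have hgfint : Integrable fun p => g p.1 * f p := by
    refine (Igρ.const_mul kr).mono
      (((hgmeas.comp measurable_fst).mul hfc.measurable).aestronglyMeasurable) ?_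
    filter_upwards with p
    have h1 := hg0 p.1
    have h2 : (0:ℝ) ≤ ρb p := hρb0 p
    have h3 := hfabs p
    have h4 := abs_nonneg (f p)
    rw [Real.norm_eq_abs, Real.norm_eq_abs, abs_mul, abs_of_nonneg h1,
      abs_of_nonneg (mul_nonneg hkrpos.le (mul_nonneg h1 h2))]
    nlinarith
  have Ihf : Integrable fun p => (‖p.2‖ ^ 2 / 2) * f p :=
    (((continuous_snd.norm.pow 2).div_const 2).mul hfc).integrable_of_hasCompactSupport
      hfsupp.mul_left
  have hghf : Integrable fun p => (g p.1 + ‖p.2‖ ^ 2 / 2) * f p :=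
    (hgfint.add Ihf).congr (Filter.Eventually.of_forall fun p => by simp only [Pi.add_apply]; ring)
  have hlogb : ∀ p ∈ K, |Real.log (ρb p)| ≤ Real.log kr := by
    intro p hp
    obtain ⟨h1, h2⟩ := hKb p hp
    rw [abs_le]
    constructor
    · have := Real.log_le_log (by positivity) h1
      rwa [Real.log_inv] at this
    · exact Real.log_le_log (lt_of_lt_of_le (by positivity) h1) h2
  have Iaf : Integrable fun p =>
      (⟪gradR (∫ θ, (∫ r, ρb (θ, r)) • Ψ θ), Ψ p.1⟫ : ℝ) * f p :=
    ((continuous_const.inner (hΨcont.comp continuous_fst)).mul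
      hfc).integrable_of_hasCompactSupport hfsupp.mul_left
  have Idf : Integrable fun p => β⁻¹ * (1 + Real.log (ρb p)) * f p := by
    refine aux_integrable hK (((measurable_const.mul
      (measurable_const.add (Real.measurable_log.comp hρbmeas))).mul
      hfc.measurable).aestronglyMeasurable)
      (C := β⁻¹ * (1 + Real.log kr)) (fun p hp => ?_) (fun p hp => by simp [hf0 p hp])
    have h1 := hlogb p hp
    have h2 := hfbdd p
    have h3 : (0:ℝ) ≤ Real.log kr := Real.log_nonneg hkr
    have h4 := abs_nonneg (Real.log (ρb p))
    have h5 : (0:ℝ) < β⁻¹ := by positivity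
    rw [Real.norm_eq_abs, abs_mul, abs_mul, abs_of_nonneg h5.le]
    have h6 : |1 + Real.log (ρb p)| ≤ 1 + Real.log kr := by
      calc |1 + Real.log (ρb p)| ≤ |(1:ℝ)| + |Real.log (ρb p)| := abs_add_le _ _
        _ ≤ 1 + Real.log kr := by rw [abs_one]; linarith
    calc β⁻¹ * |1 + Real.log (ρb p)| * |f p| ≤ β⁻¹ * (1 + Real.log kr) * 1 := by
          apply mul_le_mul (mul_le_mul_of_nonneg_left h6 h5.le) h2 (abs_nonneg _)
          positivity
      _ = β⁻¹ * (1 + Real.log kr) := mul_one _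
  -- splitting of the linear terms
  have hsplit1 : ∀ ε : ℝ, (∫ θ, (∫ r, ρb (θ, r) + ε * f (θ, r)) • Ψ θ)
      = (∫ θ, (∫ r, ρb (θ, r)) • Ψ θ) + ε • ∫ θ, (∫ r, f (θ, r)) • Ψ θ := by
    intro ε
    have hae : (fun θ => (∫ r, ρb (θ, r) + ε * f (θ, r)) • Ψ θ)
        =ᵐ[volume] fun θ => (∫ r, ρb (θ, r)) • Ψ θ + ε • ((∫ r, f (θ, r)) • Ψ θ) := by
      filter_upwards [hρbsec] with θ hθ
      rw [integral_add hθ ((hfsec θ).const_mul ε), integral_const_mul, add_smul, mul_smul]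
    have hsm : Integrable fun θ => ε • ((∫ r, f (θ, r)) • Ψ θ) := by
      exact hvint.smul ε
    rw [integral_congr_ae hae, integral_add hρbΨ hsm, integral_smul]
  have hC2int : Integrable fun θ => g θ * ∫ r, ρb (θ, r) := by
    have h1 : Integrable (fun p => g p.1 * ρb p)
        ((volume : Measure (EuclideanSpace ℝ (Fin d))).prod volume) := by rwa [← hprod]
    exact h1.integral_prod_left.congr
      (Filter.Eventually.of_forall fun θ => by
        simpa using integral_const_mul (g θ) fun r => ρb (θ, r))
  have hc2int : Integrable fun θ => g θ * ∫ r, f (θ, r) := by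
    have h1 : Integrable (fun p => g p.1 * f p)
        ((volume : Measure (EuclideanSpace ℝ (Fin d))).prod volume) := by rwa [← hprod]
    exact h1.integral_prod_left.congr
      (Filter.Eventually.of_forall fun θ => by
        simpa using integral_const_mul (g θ) fun r => f (θ, r))
  have hsplit2 : ∀ ε : ℝ, (∫ θ, g θ * ∫ r, ρb (θ, r) + ε * f (θ, r))
      = (∫ θ, g θ * ∫ r, ρb (θ, r)) + ε * ∫ θ, g θ * ∫ r, f (θ, r) := by
    intro ε
    have hae : (fun θ => g θ * ∫ r, ρb (θ, r) + ε * f (θ, r))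
        =ᵐ[volume] fun θ => g θ * (∫ r, ρb (θ, r)) + ε * (g θ * ∫ r, f (θ, r)) := by
      filter_upwards [hρbsec] with θ hθ
      rw [integral_add hθ ((hfsec θ).const_mul ε), integral_const_mul]
      ring
    rw [integral_congr_ae hae, integral_add hC2int (hc2int.const_mul ε), integral_const_mul]
  have hsplit3 : ∀ ε : ℝ, (∫ p, (‖p.2‖ ^ 2 / 2) * (ρb p + ε * f p))
      = (∫ p, (‖p.2‖ ^ 2 / 2) * ρb p) + ε * ∫ p, (‖p.2‖ ^ 2 / 2) * f p := by
    intro ε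
    rw [show (fun p : EuclideanSpace ℝ (Fin d) × EuclideanSpace ℝ (Fin d) =>
        (‖p.2‖ ^ 2 / 2) * (ρb p + ε * f p))
      = fun p => (‖p.2‖ ^ 2 / 2) * ρb p + ε * ((‖p.2‖ ^ 2 / 2) * f p) from
        funext fun p => by ring]
    rw [integral_add Ihρ (Ihf.const_mul ε), integral_const_mul]
  -- entropy derivative via dominated convergence
  set δ : ℝ := (2 * kr)⁻¹ with hδdef
  have hδpos : 0 < δ := by rw [hδdef]; positivity
  have hxlow : ∀ p ∈ K, ∀ ε : ℝ, |ε| < δ → δ ≤ ρb p + ε * f p := by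
    intro p hp ε hε
    have h1 := (hKb p hp).1
    have hef : |ε * f p| ≤ δ := by
      rw [abs_mul]
      calc |ε| * |f p| ≤ δ * 1 := mul_le_mul hε.le (hfbdd p) (abs_nonneg _) hδpos.le
        _ = δ := mul_one δ
    have h2δ : kr⁻¹ = 2 * δ := by rw [hδdef]; field_simp
    have := neg_abs_le (ε * f p)
    linarith
  have hδ1 : δ ≤ 1 := by
    rw [hδdef]
    have h1 : (1:ℝ) ≤ 2 * kr := by linarith
    calc (2 * kr)⁻¹ ≤ 1⁻¹ := by
          apply inv_anti₀ one_pos h1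
      _ = 1 := inv_one
  have hC4 : (0:ℝ) ≤ Real.log (2 * (kr + 1)) := Real.log_nonneg (by linarith)
  have hKm : MeasurableSet K := hK.isClosed.measurableSet
  have hbint : Integrable (K.indicator fun _ => Real.log (2 * (kr + 1)) + 1) :=
    (integrable_indicator_iff hKm).2 (integrableOn_const hK.measure_lt_top.ne)
  have hbd : ∀ᵐ p : EuclideanSpace ℝ (Fin d) × EuclideanSpace ℝ (Fin d),
      ∀ ε ∈ Metric.ball (0:ℝ) δ, ‖(Real.log (ρb p + ε * f p) + 1) * f p‖
        ≤ K.indicator (fun _ => Real.log (2 * (kr + 1)) + 1) p := by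
    refine Filter.Eventually.of_forall fun p ε hε => ?_
    have hεa : |ε| < δ := by simpa [Real.dist_eq] using hε
    by_cases hp : f p = 0
    · simp only [hp, mul_zero, norm_zero]
      exact Set.indicator_nonneg (fun _ _ => by linarith) p
    · have hpK := hmemK p hp
      rw [Set.indicator_of_mem hpK]
      have h1 := (hKb p hpK).1
      have h2 := (hKb p hpK).2
      have hx0 : δ ≤ ρb p + ε * f p := hxlow p hpK ε hεa
      have hef : |ε * f p| ≤ δ := by
        rw [abs_mul]
        calc |ε| * |f p| ≤ δ * 1 := mul_le_mul hεa.le (hfbdd p) (abs_nonneg _) hδpos.le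
          _ = δ := mul_one δ
      have h6 := le_abs_self (ε * f p)
      have hxhi : ρb p + ε * f p ≤ 2 * (kr + 1) := by linarith
      have hinv : (2 * (kr + 1))⁻¹ ≤ ρb p + ε * f p := by
        have : (2 * (kr + 1))⁻¹ ≤ δ := by
          rw [hδdef]
          exact inv_anti₀ (by linarith) (by linarith)
        linarith
      have hlogle : |Real.log (ρb p + ε * f p)| ≤ Real.log (2 * (kr + 1)) := by
        rw [abs_le]
        constructor
        · have h := Real.log_le_log (by positivity : (0:ℝ) < (2 * (kr + 1))⁻¹) hinv
          rwa [Real.log_inv] at h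
        · exact Real.log_le_log (by linarith) hxhi
      have h7 : |Real.log (ρb p + ε * f p) + 1| ≤ Real.log (2 * (kr + 1)) + 1 := by
        calc |Real.log (ρb p + ε * f p) + 1|
            ≤ |Real.log (ρb p + ε * f p)| + 1 := by simpa using abs_add_le (Real.log (ρb p + ε * f p)) 1
          _ ≤ Real.log (2 * (kr + 1)) + 1 := by linarith
      rw [Real.norm_eq_abs, abs_mul]
      calc |Real.log (ρb p + ε * f p) + 1| * |f p|
          ≤ (Real.log (2 * (kr + 1)) + 1) * 1 :=
            mul_le_mul h7 (hfbdd p) (abs_nonneg _) (by linarith)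
        _ = Real.log (2 * (kr + 1)) + 1 := mul_one _
  have hdiff : ∀ᵐ p : EuclideanSpace ℝ (Fin d) × EuclideanSpace ℝ (Fin d),
      ∀ ε ∈ Metric.ball (0:ℝ) δ,
        HasDerivAt (fun ε : ℝ => (ρb p + ε * f p) * Real.log (ρb p + ε * f p))
          ((Real.log (ρb p + ε * f p) + 1) * f p) ε := by
    refine Filter.Eventually.of_forall fun p ε hε => ?_
    have hεa : |ε| < δ := by simpa [Real.dist_eq] using hε
    by_cases hp : f p = 0
    · simpa [hp] using hasDerivAt_const ε (ρb p * Real.log (ρb p))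
    · have hpK := hmemK p hp
      have hx0 : (0:ℝ) < ρb p + ε * f p := lt_of_lt_of_le hδpos (hxlow p hpK ε hεa)
      have hinner : HasDerivAt (fun ε : ℝ => ρb p + ε * f p) (f p) ε := by
        simpa using (hasDerivAt_mul_const (f p)).const_add (ρb p)
      simpa [Function.comp_def] using (Real.hasDerivAt_mul_log hx0.ne').comp ε hinner
  have hent := hasDerivAt_integral_of_dominated_loc_of_deriv_le (μ := volume) (x₀ := (0:ℝ))
    (F := fun ε p => (ρb p + ε * f p) * Real.log (ρb p + ε * f p))
    (F' := fun ε p => (Real.log (ρb p + ε * f p) + 1) * f p)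
    (bound := K.indicator fun _ => Real.log (2 * (kr + 1)) + 1)
    (Metric.ball_mem_nhds _ hδpos)
    (Filter.Eventually.of_forall fun ε =>
      ((hρbmeas.add (hfc.measurable.const_mul ε)).mul
        ((hρbmeas.add (hfc.measurable.const_mul ε)).log)).aestronglyMeasurable)
    (by simpa using hρbent)
    ((((hρbmeas.add (hfc.measurable.const_mul 0)).log.add
        measurable_const).mul hfc.measurable).aestronglyMeasurable)
    hbd hbint hdiff
  have hent4 : HasDerivAt
      (fun ε : ℝ => ∫ p, (ρb p + ε * f p) * Real.log (ρb p + ε * f p))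
      (∫ p, (Real.log (ρb p) + 1) * f p) 0 := by
    simpa using hent.2
  refine ⟨?_, ?_, ?_⟩
  · -- part 1
    intro ε hε
    refine ⟨hρbmeas.add (hfc.measurable.const_mul ε), ?_, hρbint.add (hfint.const_mul ε), ?_⟩
    · intro p
      show (0:ℝ) ≤ ρb p + ε * f p
      by_cases hp : f p = 0
      · simpa [hp] using hρb0 p
      · have hpK := hmemK p hp
        have h1 := (hKb p hpK).1
        have h2 : |ε * f p| < kr⁻¹ := by
          rw [abs_mul]
          calc |ε| * |f p| ≤ |ε| * 1 := mul_le_mul_of_nonneg_left (hfbdd p) (abs_nonneg ε)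
            _ = |ε| := mul_one _
            _ < kr⁻¹ := hε
        have := neg_abs_le (ε * f p)
        linarith
    · rw [integral_add hρbint (hfint.const_mul ε), integral_const_mul, hfzero, hρb1]
      ring
  · -- part 2
    intro ε hε
    have hkr1 : kr⁻¹ ≤ 1 := by
      calc kr⁻¹ ≤ 1⁻¹ := inv_anti₀ one_pos hkr
        _ = 1 := inv_one
    have hεa1 : |ε| ≤ 1 := le_trans hε.le hkr1
    refine ⟨(hρbmom.add (hghf.const_mul ε)).congr
      (Filter.Eventually.of_forall fun p => by simp only [Pi.add_apply]; ring), ?_, ?_⟩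
    · have hD : Integrable fun p => (ρb p + ε * f p) * Real.log (ρb p + ε * f p)
          - ρb p * Real.log (ρb p) := by
        refine aux_integrable hK ((((hρbmeas.add (hfc.measurable.const_mul ε)).mul
            ((hρbmeas.add (hfc.measurable.const_mul ε)).log)).sub
            (hρbmeas.mul hρbmeas.log)).aestronglyMeasurable)
          (C := 2 * (1 + (kr + 1) * (kr + 1))) (fun p hp => ?_)
          (fun p hp => by simp [hf0 p hp])
        have h1 := (hKb p hp).1
        have h2 := (hKb p hp).2
        have h4 : |ε * f p| ≤ 1 := by
          rw [abs_mul]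
          calc |ε| * |f p| ≤ 1 * 1 := mul_le_mul hεa1 (hfbdd p) (abs_nonneg _) zero_le_one
            _ = 1 := mul_one 1
        have h5 := neg_abs_le (ε * f p)
        have h6 := le_abs_self (ε * f p)
        have hx0 : (0:ℝ) ≤ ρb p + ε * f p := by
          have h7 : |ε * f p| < kr⁻¹ := by
            rw [abs_mul]
            calc |ε| * |f p| ≤ |ε| * 1 := mul_le_mul_of_nonneg_left (hfbdd p) (abs_nonneg ε)
              _ = |ε| := mul_one _
              _ < kr⁻¹ := hε
          linarith
        have hb1 := aux_abs_mul_log_le hx0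
          (by linarith : ρb p + ε * f p ≤ kr + 1) (by linarith)
        have hb2 := aux_abs_mul_log_le (hρb0 p) (by linarith : ρb p ≤ kr + 1) (by linarith)
        have htri : |(ρb p + ε * f p) * Real.log (ρb p + ε * f p)
            - ρb p * Real.log (ρb p)|
            ≤ |(ρb p + ε * f p) * Real.log (ρb p + ε * f p)| + |ρb p * Real.log (ρb p)| := by
          rw [sub_eq_add_neg]
          simpa [abs_neg] using abs_add_le ((ρb p + ε * f p) * Real.log (ρb p + ε * f p))
            (-(ρb p * Real.log (ρb p)))
        rw [Real.norm_eq_abs]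
        linarith
      exact (hρbent.add hD).congr (Filter.Eventually.of_forall fun p => by
        simp only [Pi.add_apply]; ring)
    · refine (hρbΨ.add (hvint.smul ε)).congr ?_
      filter_upwards [hρbsec] with θ hθ
      simp only [Pi.add_apply, Pi.smul_apply]
      rw [integral_add hθ ((hfsec θ).const_mul ε), integral_const_mul, add_smul, mul_smul]
  · -- part 3 : the derivative
    set ψ₀ : F := ∫ θ, (∫ r, ρb (θ, r)) • Ψ θ with hψ₀def
    set v : F := ∫ θ, (∫ r, f (θ, r)) • Ψ θ with hvdef
    have hline : HasDerivAt (fun ε : ℝ => ψ₀ + ε • v) v 0 := by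
      simpa using ((hasDerivAt_id (0:ℝ)).smul_const v).const_add ψ₀
    have hRf : HasFDerivAt R (InnerProductSpace.toDual ℝ F (gradR ψ₀))
        ((fun ε : ℝ => ψ₀ + ε • v) 0) := by
      simpa using (hgradR ψ₀).hasFDerivAt
    have h1 : HasDerivAt (fun ε : ℝ => R (ψ₀ + ε • v)) (⟪gradR ψ₀, v⟫ : ℝ) 0 := by
      simpa [InnerProductSpace.toDual_apply_apply, Function.comp_def] using hRf.comp_hasDerivAt 0 hline
    have h2d : HasDerivAt (fun ε : ℝ => (∫ θ, g θ * ∫ r, ρb (θ, r))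
        + ε * ∫ θ, g θ * ∫ r, f (θ, r)) (∫ θ, g θ * ∫ r, f (θ, r)) 0 :=
      (hasDerivAt_mul_const _).const_add _
    have h3d : HasDerivAt (fun ε : ℝ => (∫ p, (‖p.2‖ ^ 2 / 2) * ρb p)
        + ε * ∫ p, (‖p.2‖ ^ 2 / 2) * f p) (∫ p, (‖p.2‖ ^ 2 / 2) * f p) 0 :=
      (hasDerivAt_mul_const _).const_add _
    have hsum := ((h1.add h2d).add h3d).add (hent4.const_mul β⁻¹)
    have hfun : (fun ε : ℝ => fEnergyR R Ψ g β fun p => ρb p + ε * f p)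
        = fun ε : ℝ => R (ψ₀ + ε • v)
          + ((∫ θ, g θ * ∫ r, ρb (θ, r)) + ε * ∫ θ, g θ * ∫ r, f (θ, r))
          + ((∫ p, (‖p.2‖ ^ 2 / 2) * ρb p) + ε * ∫ p, (‖p.2‖ ^ 2 / 2) * f p)
          + β⁻¹ * ∫ p, (ρb p + ε * f p) * Real.log (ρb p + ε * f p) := by
      funext ε
      simp only [fEnergyR]
      rw [hsplit1 ε, hsplit2 ε, hsplit3 ε]
    have hIa : (⟪gradR ψ₀, v⟫ : ℝ) = ∫ p, (⟪gradR ψ₀, Ψ p.1⟫ : ℝ) * f p := by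
      have hIa2 : Integrable (fun p : EuclideanSpace ℝ (Fin d) × EuclideanSpace ℝ (Fin d) =>
          (⟪gradR ψ₀, Ψ p.1⟫ : ℝ) * f p)
          ((volume : Measure (EuclideanSpace ℝ (Fin d))).prod volume) := by
        rw [← hprod]; exact Iaf
      calc (⟪gradR ψ₀, v⟫ : ℝ)
          = ∫ θ, (⟪gradR ψ₀, (∫ r, f (θ, r)) • Ψ θ⟫ : ℝ) :=
            (integral_inner hvint (gradR ψ₀)).symm
        _ = ∫ θ, ∫ r, (⟪gradR ψ₀, Ψ θ⟫ : ℝ) * f (θ, r) := by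
            refine integral_congr_ae (Filter.Eventually.of_forall fun θ => ?_)
            simp only [real_inner_smul_right, integral_const_mul]
            ring
        _ = ∫ p, (⟪gradR ψ₀, Ψ p.1⟫ : ℝ) * f p := by
            have h := integral_prod _ hIa2
            rw [hprod]
            simpa using h.symm
    have hIb : (∫ θ, g θ * ∫ r, f (θ, r)) = ∫ p, g p.1 * f p := by
      have hgf2 : Integrable (fun p : EuclideanSpace ℝ (Fin d) × EuclideanSpace ℝ (Fin d) =>
          g p.1 * f p) ((volume : Measure (EuclideanSpace ℝ (Fin d))).prod volume) := by
        rw [← hprod]; exact hgfint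
      calc (∫ θ, g θ * ∫ r, f (θ, r)) = ∫ θ, ∫ r, g θ * f (θ, r) := by
            refine integral_congr_ae (Filter.Eventually.of_forall fun θ => ?_)
            simp only [integral_const_mul]
        _ = ∫ p, g p.1 * f p := by
            have h := integral_prod _ hgf2
            rw [hprod]
            simpa using h.symm
    have hlast : β⁻¹ * (∫ p, (Real.log (ρb p) + 1) * f p)
        = ∫ p, β⁻¹ * (1 + Real.log (ρb p)) * f p := by
      rw [← integral_const_mul]
      exact integral_congr_ae (Filter.Eventually.of_forall fun p => by ring)
    have hID : (∫ p, ((⟪gradR ψ₀, Ψ p.1⟫ : ℝ) + g p.1 + ‖p.2‖ ^ 2 / 2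
          + β⁻¹ * (1 + Real.log (ρb p))) * f p)
        = (⟪gradR ψ₀, v⟫ : ℝ) + (∫ θ, g θ * ∫ r, f (θ, r))
          + (∫ p, (‖p.2‖ ^ 2 / 2) * f p) + β⁻¹ * ∫ p, (Real.log (ρb p) + 1) * f p := by
      rw [show (fun p : EuclideanSpace ℝ (Fin d) × EuclideanSpace ℝ (Fin d) =>
          ((⟪gradR ψ₀, Ψ p.1⟫ : ℝ) + g p.1 + ‖p.2‖ ^ 2 / 2
            + β⁻¹ * (1 + Real.log (ρb p))) * f p)
          = fun p => (⟪gradR ψ₀, Ψ p.1⟫ : ℝ) * f p + g p.1 * f p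
            + (‖p.2‖ ^ 2 / 2) * f p + β⁻¹ * (1 + Real.log (ρb p)) * f p from
          funext fun p => by ring]
      have I1 : Integrable fun p : EuclideanSpace ℝ (Fin d) × EuclideanSpace ℝ (Fin d) =>
          (⟪gradR ψ₀, Ψ p.1⟫ : ℝ) * f p + g p.1 * f p := Iaf.add hgfint
      have I2 : Integrable fun p : EuclideanSpace ℝ (Fin d) × EuclideanSpace ℝ (Fin d) =>
          (⟪gradR ψ₀, Ψ p.1⟫ : ℝ) * f p + g p.1 * f p + (‖p.2‖ ^ 2 / 2) * f p := I1.add Ihf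
      rw [integral_add I2 Idf, integral_add I1 Ihf, integral_add Iaf hgfint]
      rw [← hIa, ← hIb, ← hlast]
    rw [hfun, hID]
    exact hsum
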